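/- Common null vector of D and P forces a zero signal: Assume ω_k > 0 for all k. If d ∈ ℂ^{m_ue} satisfies D d = 0 and P d = 0, then g_{kk}·d_k = 0 for every k = 1,…,m_ue; in particular, if d ≠ 0 then g_{kk} = 0 (equivalently S_k = 0, some user gets a zero signal) for some k. -/

import Mathlib

open Matrix Finset

noncomputable def Gmat {mtx mue : ℕ} (H P : Matrix (Fin mtx) (Fin mue) ℂ) :
    Matrix (Fin mue) (Fin mue) ℂ := Hᴴ * P

noncomputable def Sval {mtx mue : ℕ} (H P : Matrix (Fin mtx) (Fin mue) ℂ) (k : Fin mue) : ℝ :=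
  ‖Gmat H P k k‖ ^ 2

noncomputable def Ival {mtx mue : ℕ} (H P : Matrix (Fin mtx) (Fin mue) ℂ) (k : Fin mue) : ℝ :=
  ∑ j ∈ Finset.univ.erase k, ‖Gmat H P k j‖ ^ 2

noncomputable def Wval {mtx mue : ℕ} (H P : Matrix (Fin mtx) (Fin mue) ℂ)
    (ω : Fin mue → ℝ) (k : Fin mue) : ℝ := Ival H P k + ω k ^ 2

noncomputable def Lval {mtx mue : ℕ} (H P : Matrix (Fin mtx) (Fin mue) ℂ) (k : Fin mue) : ℝ :=
  ∑ j ∈ Finset.univ.erase k, ‖Gmat H P j k‖ ^ 2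

noncomputable def SINR {mtx mue : ℕ} (H P : Matrix (Fin mtx) (Fin mue) ℂ)
    (ω : Fin mue → ℝ) (k : Fin mue) : ℝ := Sval H P k / Wval H P ω k

def PowerOK {mtx mue : ℕ} (β : Fin mtx → ℝ) (P : Matrix (Fin mtx) (Fin mue) ℂ) : Prop :=
  ∀ i, ∑ j, ‖P i j‖ ^ 2 ≤ β i

def ParetoOptimal {mtx mue : ℕ} (H : Matrix (Fin mtx) (Fin mue) ℂ) (ω : Fin mue → ℝ)
    (β : Fin mtx → ℝ) (P : Matrix (Fin mtx) (Fin mue) ℂ) : Prop :=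
  PowerOK β P ∧ ¬ ∃ Q : Matrix (Fin mtx) (Fin mue) ℂ, PowerOK β Q ∧
    (∀ k, SINR H P ω k ≤ SINR H Q ω k) ∧ (∃ k, SINR H P ω k < SINR H Q ω k)

/-- The matrix `F` with `F_{kk} = 1` and `F_{kj} = -S_k/W_k` for `j ≠ k`. -/
noncomputable def Fmat {mtx mue : ℕ} (H P : Matrix (Fin mtx) (Fin mue) ℂ) (ω : Fin mue → ℝ) :
    Matrix (Fin mue) (Fin mue) ℂ :=
  Matrix.of fun k j => if k = j then 1 else ((-(Sval H P k / Wval H P ω k) : ℝ) : ℂ)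

/-- `D := 4 · diag(1/W_1,…,1/W_{m_ue}) · (G ∘ F)`. -/
noncomputable def Dmat {mtx mue : ℕ} (H P : Matrix (Fin mtx) (Fin mue) ℂ) (ω : Fin mue → ℝ) :
    Matrix (Fin mue) (Fin mue) ℂ :=
  (4 : ℂ) • (Matrix.diagonal fun k => (((Wval H P ω k)⁻¹ : ℝ) : ℂ)) *
    Matrix.hadamard (Gmat H P) (Fmat H P ω)

/-- **Common null vector of `D` and `P` forces a zero signal.** -/
theorem common_null_vector_zero_signal {mtx mue : ℕ}
    (H P : Matrix (Fin mtx) (Fin mue) ℂ) (ω : Fin mue → ℝ) (hω : ∀ k, 0 < ω k)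
    (d : Fin mue → ℂ) (hD : (Dmat H P ω).mulVec d = 0) (hP : P.mulVec d = 0) :
    (∀ k, Gmat H P k k * d k = 0) ∧ (d ≠ 0 → ∃ k, Gmat H P k k = 0) := by

  have hW : ∀ k, 0 < Wval H P ω k := by
    intro k
    have hI : 0 ≤ Ival H P k :=
      Finset.sum_nonneg (fun j _ => by positivity)
    have := hω k
    unfold Wval
    nlinarith
  have hG : (Gmat H P).mulVec d = 0 := by
    unfold Gmat
    rw [← Matrix.mulVec_mulVec, hP, Matrix.mulVec_zero]
  have key : ∀ k, Gmat H P k k * d k = 0 := by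
    intro k
    have h1 := congrFun hD k
    have h2 := congrFun hG k
    simp only [Matrix.mulVec, dotProduct, Pi.zero_apply] at h1 h2
    have hDentry : ∀ j, Dmat H P ω k j =
        4 * (((Wval H P ω k)⁻¹ : ℝ) : ℂ) * (Gmat H P k j * Fmat H P ω k j) := by
      intro j
      simp [Dmat, Matrix.smul_mul, Matrix.diagonal_mul, Matrix.hadamard_apply, mul_assoc]
    have h1' : ∑ j, Gmat H P k j * Fmat H P ω k j * d j = 0 := by
      have hWne : (((Wval H P ω k)⁻¹ : ℝ) : ℂ) ≠ 0 := by
        simp [Complex.ofReal_ne_zero, (hW k).ne']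
      have : (4 * (((Wval H P ω k)⁻¹ : ℝ) : ℂ)) *
          ∑ j, Gmat H P k j * Fmat H P ω k j * d j = 0 := by
        rw [Finset.mul_sum]
        rw [← h1]
        apply Finset.sum_congr rfl
        intro j _
        rw [hDentry j]
        ring
      rcases mul_eq_zero.mp this with h | h
      · exact absurd h (by simp [Complex.ofReal_ne_zero, (hW k).ne'])
      · exact h
    set c : ℂ := ((Sval H P k / Wval H P ω k : ℝ) : ℂ) with hc
    have hsplit1 : Gmat H P k k * d k +
        ∑ j ∈ Finset.univ.erase k, Gmat H P k j * (-c) * d j = 0 := by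
      rw [← h1']
      rw [← Finset.add_sum_erase _ _ (Finset.mem_univ k)]
      congr 1
      · simp [Fmat]
      · apply Finset.sum_congr rfl
        intro j hj
        have : k ≠ j := fun h => (Finset.mem_erase.mp hj).1 h.symm
        simp [Fmat, this, hc]
    have hsplit2 : ∑ j ∈ Finset.univ.erase k, Gmat H P k j * d j
        = -(Gmat H P k k * d k) := by
      have h2' : Gmat H P k k * d k + ∑ j ∈ Finset.univ.erase k, Gmat H P k j * d j = 0 := by
        have := Finset.add_sum_erase Finset.univ (fun j => Gmat H P k j * d j)
          (Finset.mem_univ k)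
        rw [this]; exact h2
      linear_combination h2'
    have hfinal : (1 + c) * (Gmat H P k k * d k) = 0 := by
      have : ∑ j ∈ Finset.univ.erase k, Gmat H P k j * (-c) * d j
          = -c * ∑ j ∈ Finset.univ.erase k, Gmat H P k j * d j := by
        rw [Finset.mul_sum]
        apply Finset.sum_congr rfl
        intro j _; ring
      rw [this, hsplit2] at hsplit1
      linear_combination hsplit1
    have hcne : (1 + c) ≠ 0 := by
      have hnn : 0 ≤ Sval H P k / Wval H P ω k := by
        apply div_nonneg
        · unfold Sval; positivity
        · exact (hW k).le
      rw [hc]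
      have : ((1 + Sval H P k / Wval H P ω k : ℝ) : ℂ) ≠ 0 := by
        rw [Complex.ofReal_ne_zero]
        linarith
      simpa using this
    rcases mul_eq_zero.mp hfinal with h | h
    · exact absurd h hcne
    · exact h
  refine ⟨key, fun hd => ?_⟩
  obtain ⟨k, hk⟩ := Function.ne_iff.mp hd
  exact ⟨k, by
    rcases mul_eq_zero.mp (key k) with h | h
    · exact h
    · exact absurd h hk⟩
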